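/- Let F be a field, J = J_m(0), D = diag(α, α−1, ..., α−(m−1)), and g ∈ F[X] with no constant term. Then (I − g(J))^{-1} D (I − g(J)) = D − (I + g(J) + ··· + g(J)^{m−1}) g'(J) J, where g' is the formal derivative of g. -/

import Mathlib

/-- The m×m upper triangular Jordan block with eigenvalue α. -/
def jordanBlock {F : Type*} [Field F] (m : ℕ) (α : F) :
    Matrix (Fin m) (Fin m) F :=
  fun i j => if (i : ℕ) + 1 = (j : ℕ) then 1 else if i = j then α else 0

/-!
Since `D J = J D + J`, commuting `D` past a polynomial in `J` acts as the formal derivative: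
`D p(J) = p(J) D + p'(J) J`. For `p = 1 - g` this reads `D (1 - g(J)) = (1 - g(J)) D - g'(J) J`,
and multiplying on the left by `(1 - g(J))⁻¹` gives the formula. The inverse is the truncated
geometric series because `g(J)` is divisible by `J`, hence `g(J) ^ m = 0`.
-/

open Polynomial Matrix

namespace Polynomial

variable {R A : Type*} [CommSemiring R] [Semiring A] [Algebra R A]

theorem mul_aeval_eq_aeval_mul_add {a b c : A} (hbc : Commute b c) (h : a * b = b * a + c)
    (p : R[X]) : a * aeval b p = aeval b p * a + aeval b (derivative p) * c := by
  induction p using Polynomial.induction_on with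
  | C r => simp [Algebra.commutes]
  | add p q hp hq =>
    simp only [map_add, mul_add, add_mul, hp, hq]
    abel
  | monomial n r ih =>
    rw [pow_succ, ← mul_assoc, derivative_mul, derivative_X, mul_one]
    generalize C r * X ^ n = p at ih ⊢
    simp only [map_add, map_mul, aeval_X]
    rw [← mul_assoc, ih, add_mul, mul_assoc _ a, h, mul_assoc _ c, ← hbc.eq]
    simp only [mul_add, add_mul, mul_assoc]
    abel

theorem aeval_pow_eq_zero_of_coeff_zero {b : A} {n : ℕ} (hb : b ^ n = 0) {p : R[X]}
    (hp : p.coeff 0 = 0) : aeval b p ^ n = 0 := by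
  obtain ⟨q, rfl⟩ := X_dvd_iff.mpr hp
  rw [map_mul, ((commute_X q).map (aeval b)).mul_pow, aeval_X, hb, zero_mul]

end Polynomial

section JordanBlock

variable {F : Type*} [Field F] {m : ℕ}

theorem jordanBlock_zero_pow_apply (k : ℕ) (i j : Fin m) :
    (jordanBlock m (0 : F) ^ k) i j = if (i : ℕ) + k = j then 1 else 0 := by
  induction k generalizing i with
  | zero => simp [one_apply, Fin.ext_iff]
  | succ k ih =>
    rw [pow_succ', mul_apply]
    simp only [ih, jordanBlock, ite_mul, one_mul, zero_mul, ite_self]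
    rcases lt_or_ge ((i : ℕ) + 1) m with hi | hi
    · rw [Finset.sum_eq_single ⟨i + 1, hi⟩]
      · simp [add_assoc, add_comm 1 k]
      · intro x _ hx
        rw [if_neg fun h => hx (Fin.ext h.symm)]
      · simp
    · rw [if_neg (by omega)]
      exact Finset.sum_eq_zero fun x _ => if_neg (by omega)

theorem jordanBlock_zero_pow_self (m : ℕ) :
    jordanBlock m (0 : F) ^ m = 0 := by
  ext i j
  rw [jordanBlock_zero_pow_apply, if_neg (by omega), Matrix.zero_apply]

theorem diagonal_mul_jordanBlock_zero (α : F) :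
    diagonal (fun i : Fin m => α - (i : ℕ)) * jordanBlock m 0 =
      jordanBlock m 0 * diagonal (fun i : Fin m => α - (i : ℕ)) + jordanBlock m 0 := by
  ext i j
  simp only [diagonal_mul, mul_diagonal, Matrix.add_apply, jordanBlock, ite_self]
  split_ifs with h
  · rw [← h]; push_cast; ring
  · ring

end JordanBlock

theorem stmt14_general {F : Type*} [Field F] {m : ℕ} (α : F)
    (g : Polynomial F) (hg : g.coeff 0 = 0) :
    letI J : Matrix (Fin m) (Fin m) F := jordanBlock m 0
    letI D : Matrix (Fin m) (Fin m) F :=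
      Matrix.diagonal (fun i : Fin m => α - (i : ℕ))
    (1 - Polynomial.aeval J g)⁻¹ * D * (1 - Polynomial.aeval J g) =
      D - (∑ i ∈ Finset.range m, (Polynomial.aeval J g) ^ i) *
        Polynomial.aeval J (Polynomial.derivative g) * J := by
  set J := jordanBlock m (0 : F)
  set D := diagonal fun i : Fin m => α - (i : ℕ)
  set N := aeval J g
  set S := ∑ i ∈ Finset.range m, N ^ i
  have hS : S * (1 - N) = 1 := by
    rw [geom_sum_mul_neg, aeval_pow_eq_zero_of_coeff_zero (jordanBlock_zero_pow_self m) hg,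
      sub_zero]
  have hDN : D * N = N * D + aeval J (derivative g) * J :=
    mul_aeval_eq_aeval_mul_add (Commute.refl J) (diagonal_mul_jordanBlock_zero α) g
  calc (1 - N)⁻¹ * D * (1 - N) = S * ((1 - N) * D - aeval J (derivative g) * J) := by
        rw [inv_eq_left_inv hS, mul_assoc, mul_sub, mul_one, hDN, sub_mul, one_mul, sub_sub]
    _ = D - S * aeval J (derivative g) * J := by
        rw [mul_sub, ← mul_assoc, hS, one_mul, mul_assoc]

theorem stmt14 {F : Type*} [Field F] {m : ℕ} (hm : 1 ≤ m) (α : F)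
    (g : Polynomial F) (hg : g.coeff 0 = 0) :
    letI J : Matrix (Fin m) (Fin m) F := jordanBlock m 0
    letI D : Matrix (Fin m) (Fin m) F :=
      Matrix.diagonal (fun i : Fin m => α - (i : ℕ))
    (1 - Polynomial.aeval J g)⁻¹ * D * (1 - Polynomial.aeval J g) =
      D - (∑ i ∈ Finset.range m, (Polynomial.aeval J g) ^ i) *
        Polynomial.aeval J (Polynomial.derivative g) * J :=
  stmt14_general α g hg
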